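/- arXiv:math/0505603 — 6 statements merged into one kernel-verified Lean document; each statement's English description precedes it below -/
import Mathlib

section
/- If y ∈ ℝⁿ does not lie in the column space of X (so that S²_y > 0) and a is a real number with a > 1 − (n − q)/2, then ∫_0^∞ ∫_{ℝ^q} (σ²)^{−n/2 − a} det(Σ)^{−1/2} exp{−(y − Xθ)'Σ^{-1}(y − Xθ)/(2σ²)} dθ d(σ²) = (2π)^{q/2} · 2^{(n−q)/2 + a − 1} · Γ((n−q)/2 + a − 1) · det(Σ)^{−1/2} · det(X'Σ^{-1}X)^{−1/2} · (S²_y)^{−((n−q)/2 + a − 1)}; in particular the double integral is finite. -/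
open Matrix MeasureTheory Real Set
open scoped MatrixOrder

/-!
Completing the square around the generalised least-squares estimate
`θ̂ = (X'Σ⁻¹X)⁻¹X'Σ⁻¹y` splits the exponent as `(θ - θ̂)'(X'Σ⁻¹X)(θ - θ̂) + S²_y`.
The Gaussian integral in `θ` (substitute `θ ↦ √(X'Σ⁻¹X) (θ - θ̂)`) then contributes
`(2πσ²)^{q/2} det(X'Σ⁻¹X)^{-1/2} exp(-S²_y / 2σ²)`, and what is left in `σ²` is an
inverse-gamma integral: `s ↦ 1/s` turns it into Euler's integral for `Γ(b)`,
`b = (n - q)/2 + a - 1`, which converges because `S²_y > 0` and `b > 0`. The integrand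
is nonnegative, so finiteness of the iterated integral gives integrability on the product.
-/

lemma Matrix.mulVec_injective_of_rank_eq_card {K m n : Type*} [Field K] [Fintype n]
    {X : Matrix m n K} (hX : X.rank = Fintype.card n) : Function.Injective X.mulVec := by
  have hker : Module.finrank K (LinearMap.ker X.mulVecLin) = 0 := by
    have := X.mulVecLin.finrank_range_add_finrank_ker
    rw [← Matrix.rank, hX, Module.finrank_fintype_fun_eq_card] at this
    omega
  simpa only [coe_mulVecLin] using LinearMap.ker_eq_bot.mp (Submodule.finrank_eq_zero.mp hker)

section LeastSquares

variable {R : Type*} [CommRing R] {m n : Type*} [Fintype m] [Fintype n]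

lemma dotProduct_mulVec_comm_of_transpose_eq {W : Matrix m m R} (hW : Wᵀ = W) (u v : m → R) :
    u ⬝ᵥ W *ᵥ v = v ⬝ᵥ W *ᵥ u := by
  rw [dotProduct_mulVec, ← mulVec_transpose, hW, dotProduct_comm]

lemma mulVec_dotProduct_mulVec (W : Matrix m m R) (X : Matrix m n R) (u : n → R) (v : m → R) :
    (X *ᵥ u) ⬝ᵥ W *ᵥ v = u ⬝ᵥ Xᵀ *ᵥ (W *ᵥ v) := by
  rw [dotProduct_comm, dotProduct_mulVec, ← mulVec_transpose, dotProduct_comm]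

variable [DecidableEq m] [DecidableEq n]

noncomputable def glsEstimate (W : Matrix m m R) (X : Matrix m n R) (y : m → R) : n → R :=
  ((Xᵀ * W * X)⁻¹ * Xᵀ * W) *ᵥ y

/-- With `W = Σ⁻¹` this is the paper's `S²_y = y'Qy`. -/
noncomputable def glsResidualSq (W : Matrix m m R) (X : Matrix m n R) (y : m → R) : R :=
  y ⬝ᵥ (W * (1 - X * (Xᵀ * W * X)⁻¹ * Xᵀ * W)) *ᵥ y

variable {W : Matrix m m R} (X : Matrix m n R) (y : m → R)

omit [DecidableEq m] in
lemma transpose_mulVec_mulVec_sub_glsEstimate (hA : IsUnit (Xᵀ * W * X).det) :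
    Xᵀ *ᵥ (W *ᵥ (y - X *ᵥ glsEstimate W X y)) = 0 := by
  have : Xᵀ * W * X * (Xᵀ * W * X)⁻¹ * Xᵀ * W = Xᵀ * W := by
    rw [mul_nonsing_inv _ hA, Matrix.one_mul]
  simp only [glsEstimate, mulVec_sub, mulVec_mulVec, ← Matrix.mul_assoc, this, sub_self]

lemma residual_dotProduct_mulVec_eq_glsResidualSq (hA : IsUnit (Xᵀ * W * X).det) :
    (y - X *ᵥ glsEstimate W X y) ⬝ᵥ W *ᵥ (y - X *ᵥ glsEstimate W X y)
      = glsResidualSq W X y := by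
  rw [sub_dotProduct, mulVec_dotProduct_mulVec, transpose_mulVec_mulVec_sub_glsEstimate X y hA,
    dotProduct_zero, sub_zero, glsEstimate, glsResidualSq]
  simp only [mulVec_sub, mulVec_mulVec, Matrix.mul_sub, Matrix.mul_one, Matrix.mul_assoc,
    sub_mulVec]

lemma dotProduct_mulVec_sub_mulVec_eq (hW : Wᵀ = W) (hA : IsUnit (Xᵀ * W * X).det)
    (θ : n → R) :
    (y - X *ᵥ θ) ⬝ᵥ W *ᵥ (y - X *ᵥ θ)
      = (θ - glsEstimate W X y) ⬝ᵥ (Xᵀ * W * X) *ᵥ (θ - glsEstimate W X y)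
        + glsResidualSq W X y := by
  rw [← residual_dotProduct_mulVec_eq_glsResidualSq X y hA]
  set r := y - X *ᵥ glsEstimate W X y
  set d := θ - glsEstimate W X y
  have hcross : (X *ᵥ d) ⬝ᵥ W *ᵥ r = 0 := by
    rw [mulVec_dotProduct_mulVec, transpose_mulVec_mulVec_sub_glsEstimate X y hA, dotProduct_zero]
  have hsplit : y - X *ᵥ θ = r - X *ᵥ d := by simp only [r, d, mulVec_sub]; abel
  rw [hsplit]
  simp only [mulVec_sub, sub_dotProduct, dotProduct_sub]
  rw [dotProduct_mulVec_comm_of_transpose_eq hW r (X *ᵥ d), hcross, mulVec_dotProduct_mulVec,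
    ← mulVec_mulVec, ← mulVec_mulVec]
  ring

lemma glsResidualSq_pos [PartialOrder R] [StarRing R] [TrivialStar R] (hW : W.PosDef)
    (hA : IsUnit (Xᵀ * W * X).det) (hy : ∀ θ, X *ᵥ θ ≠ y) : 0 < glsResidualSq W X y := by
  rw [← residual_dotProduct_mulVec_eq_glsResidualSq X y hA]
  simpa using hW.dotProduct_mulVec_pos (sub_ne_zero.mpr (hy _).symm)

end LeastSquares

section Gaussian

variable {ι : Type*} [Fintype ι]

lemma exp_neg_mul_sum_sq_eq_prod (c : ℝ) (x : ι → ℝ) :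
    exp (-c * ∑ i, x i ^ 2) = ∏ i, exp (-c * x i ^ 2) := by
  rw [← exp_sum, Finset.mul_sum]

lemma integrable_exp_neg_mul_sum_sq {c : ℝ} (hc : 0 < c) :
    Integrable (fun x : ι → ℝ => exp (-c * ∑ i, x i ^ 2)) := by
  simp_rw [exp_neg_mul_sum_sq_eq_prod]
  exact Integrable.fintype_prod fun _ => integrable_exp_neg_mul_sq hc

lemma integral_exp_neg_mul_sum_sq {c : ℝ} (hc : 0 < c) :
    ∫ x : ι → ℝ, exp (-c * ∑ i, x i ^ 2) = (π / c) ^ ((Fintype.card ι : ℝ) / 2) := by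
  simp_rw [exp_neg_mul_sum_sq_eq_prod]
  rw [volume_pi, integral_fintype_prod_eq_pow (fun t => exp (-c * t ^ 2)), integral_gaussian,
    sqrt_eq_rpow, ← rpow_natCast, ← rpow_mul (by positivity)]
  ring_nf

variable [DecidableEq ι] {E : Type*} [NormedAddCommGroup E]

lemma Matrix.measurableEmbedding_toLin' {B : Matrix ι ι ℝ} (hB : B.det ≠ 0) :
    MeasurableEmbedding (toLin' B) :=
  (LinearMap.isClosedEmbedding_of_injective <| LinearMap.ker_eq_bot.mpr <|
    mulVec_injective_iff_isUnit.mpr <| (isUnit_iff_isUnit_det B).mpr hB.isUnit).measurableEmbedding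

lemma Matrix.integral_comp_mulVec [NormedSpace ℝ E] {B : Matrix ι ι ℝ} (hB : B.det ≠ 0)
    (f : (ι → ℝ) → E) : ∫ x, f (B *ᵥ x) = |B.det|⁻¹ • ∫ x, f x := by
  change ∫ x, f (toLin' B x) = _
  rw [← (measurableEmbedding_toLin' hB).integral_map, map_matrix_volume_pi_eq_smul_volume_pi hB,
    integral_smul_measure, ENNReal.toReal_ofReal (by positivity), abs_inv]

lemma Matrix.integrable_comp_mulVec_iff {B : Matrix ι ι ℝ} (hB : B.det ≠ 0)
    {f : (ι → ℝ) → E} : Integrable (fun x => f (B *ᵥ x)) ↔ Integrable f := by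
  change Integrable (f ∘ toLin' B) ↔ _
  rw [← (measurableEmbedding_toLin' hB).integrable_map_iff,
    map_matrix_volume_pi_eq_smul_volume_pi hB]
  exact integrable_smul_measure (by simpa using hB) ENNReal.ofReal_ne_top

variable {A : Matrix ι ι ℝ}

lemma Matrix.PosSemidef.dotProduct_mulVec_eq_sum_sq_sqrt (hA : A.PosSemidef) (v : ι → ℝ) :
    v ⬝ᵥ A *ᵥ v = ∑ i, (CFC.sqrt A *ᵥ v) i ^ 2 := by
  have hB : (CFC.sqrt A)ᵀ = CFC.sqrt A := (CFC.sqrt_nonneg A).posSemidef.isHermitian.eq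
  conv_lhs => rw [← CFC.sqrt_mul_sqrt_self A hA.nonneg, ← mulVec_mulVec, dotProduct_mulVec,
    ← mulVec_transpose, hB]
  simp [dotProduct, sq]

lemma Matrix.PosSemidef.det_sqrt_eq_rpow (hA : A.PosSemidef) :
    (CFC.sqrt A).det = A.det ^ (1 / 2 : ℝ) := by
  simpa [sqrt_eq_rpow] using hA.det_sqrt

lemma Matrix.PosDef.det_sqrt_pos (hA : A.PosDef) : 0 < (CFC.sqrt A).det := by
  rw [hA.posSemidef.det_sqrt_eq_rpow]
  exact rpow_pos_of_pos hA.det_pos _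

lemma integral_exp_neg_mul_dotProduct_mulVec (hA : A.PosDef) {c : ℝ} (hc : 0 < c)
    (m : ι → ℝ) :
    ∫ θ : ι → ℝ, exp (-c * ((θ - m) ⬝ᵥ A *ᵥ (θ - m)))
      = (π / c) ^ ((Fintype.card ι : ℝ) / 2) * A.det ^ (-(1 : ℝ) / 2) := by
  simp_rw [hA.posSemidef.dotProduct_mulVec_eq_sum_sq_sqrt]
  rw [integral_sub_right_eq_self (fun θ => exp (-c * ∑ i, (CFC.sqrt A *ᵥ θ) i ^ 2)) m,
    integral_comp_mulVec hA.det_sqrt_pos.ne' fun x => exp (-c * ∑ i, x i ^ 2),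
    integral_exp_neg_mul_sum_sq hc, abs_of_pos hA.det_sqrt_pos, hA.posSemidef.det_sqrt_eq_rpow,
    smul_eq_mul, mul_comm, ← rpow_neg hA.det_pos.le]
  norm_num

lemma integrable_exp_neg_mul_dotProduct_mulVec (hA : A.PosDef) {c : ℝ} (hc : 0 < c)
    (m : ι → ℝ) :
    Integrable fun θ : ι → ℝ => exp (-c * ((θ - m) ⬝ᵥ A *ᵥ (θ - m))) := by
  simp_rw [hA.posSemidef.dotProduct_mulVec_eq_sum_sq_sqrt]
  exact ((integrable_comp_mulVec_iff hA.det_sqrt_pos.ne').mpr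
    (integrable_exp_neg_mul_sum_sq hc)).comp_sub_right m

end Gaussian

section InverseGamma

variable {b r : ℝ}

lemma rpow_neg_sub_one_mul_exp_neg_div_eq_smul_comp_inv {x : ℝ} (hx : 0 < x) :
    x ^ (-b - 1) * exp (-r / x)
      = (|(-1 : ℝ)| * x ^ ((-1 : ℝ) - 1)) •
          ((x ^ (-1 : ℝ)) ^ (b - 1) * exp (-(r * x ^ (-1 : ℝ)))) := by
  rw [abs_neg, abs_one, one_mul, smul_eq_mul, ← rpow_mul hx.le, ← mul_assoc, ← rpow_add hx,
    rpow_neg_one, neg_div, div_eq_mul_inv]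
  ring_nf

lemma integrableOn_rpow_neg_sub_one_mul_exp_neg_div_Ioi (hb : 0 < b) (hr : 0 < r) :
    IntegrableOn (fun s : ℝ => s ^ (-b - 1) * exp (-r / s)) (Ioi 0) := by
  have h := integrableOn_rpow_mul_exp_neg_mul_rpow (s := b - 1) (p := 1) (by linarith) one_pos hr
  simp_rw [rpow_one, neg_mul] at h
  exact (integrableOn_congr_fun (fun x hx => rpow_neg_sub_one_mul_exp_neg_div_eq_smul_comp_inv hx)
    measurableSet_Ioi).mpr ((integrableOn_Ioi_comp_rpow_iff _ (p := -1) (by norm_num)).mpr h)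

lemma integral_rpow_neg_sub_one_mul_exp_neg_div_Ioi (hb : 0 < b) (hr : 0 < r) :
    ∫ s in Ioi 0, s ^ (-b - 1) * exp (-r / s) = Gamma b * r ^ (-b) := by
  rw [setIntegral_congr_fun measurableSet_Ioi
      fun x hx => rpow_neg_sub_one_mul_exp_neg_div_eq_smul_comp_inv hx,
    integral_comp_rpow_Ioi (fun t => t ^ (b - 1) * exp (-(r * t))) (by norm_num),
    integral_rpow_mul_exp_neg_mul_Ioi hb hr, one_div, inv_rpow hr.le, ← rpow_neg hr.le, mul_comm]

end InverseGamma

lemma integrableOn_prod_univ_of_nonneg {α β : Type*} [MeasurableSpace α] [MeasurableSpace β]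
    {μ : Measure α} {ν : Measure β} [SFinite μ] [SFinite ν] {s : Set α} {f : α × β → ℝ}
    (hs : MeasurableSet s) (hf : AEStronglyMeasurable f ((μ.restrict s).prod ν))
    (hf0 : ∀ x ∈ s, ∀ y, 0 ≤ f (x, y))
    (hsec : ∀ x ∈ s, Integrable (fun y => f (x, y)) ν)
    (hint : IntegrableOn (fun x => ∫ y, f (x, y) ∂ν) s μ) :
    IntegrableOn f (s ×ˢ univ) (μ.prod ν) := by
  rw [IntegrableOn, ← Measure.prod_restrict, Measure.restrict_univ]
  refine (integrable_prod_iff hf).mpr ⟨?_, hint.congr ?_⟩ <;>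
    filter_upwards [ae_restrict_mem hs] with x hx
  · exact hsec x hx
  · simp_rw [Real.norm_of_nonneg (hf0 x hx _)]

section GaussianLikelihood

variable {m n : Type*} [Fintype m] [Fintype n] [DecidableEq m] [DecidableEq n]
  {W : Matrix m m ℝ} {X : Matrix m n ℝ}

lemma exp_neg_dotProduct_mulVec_sub_mulVec_div (hW : Wᵀ = W) (hA : IsUnit (Xᵀ * W * X).det)
    (y : m → ℝ) (s : ℝ) (θ : n → ℝ) :
    exp (-((y - X *ᵥ θ) ⬝ᵥ W *ᵥ (y - X *ᵥ θ)) / (2 * s))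
      = exp (-glsResidualSq W X y / (2 * s)) * exp (-(1 / (2 * s)) *
          ((θ - glsEstimate W X y) ⬝ᵥ (Xᵀ * W * X) *ᵥ (θ - glsEstimate W X y))) := by
  rw [dotProduct_mulVec_sub_mulVec_eq X y hW hA, ← exp_add]
  ring_nf

lemma integrable_exp_neg_dotProduct_mulVec_sub_mulVec_div (hW : Wᵀ = W)
    (hA : (Xᵀ * W * X).PosDef) (y : m → ℝ) {s : ℝ} (hs : 0 < s) :
    Integrable fun θ => exp (-((y - X *ᵥ θ) ⬝ᵥ W *ᵥ (y - X *ᵥ θ)) / (2 * s)) := by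
  simp_rw [exp_neg_dotProduct_mulVec_sub_mulVec_div hW hA.det_pos.ne'.isUnit]
  exact (integrable_exp_neg_mul_dotProduct_mulVec hA (by positivity) _).const_mul _

lemma integral_exp_neg_dotProduct_mulVec_sub_mulVec_div (hW : Wᵀ = W)
    (hA : (Xᵀ * W * X).PosDef) (y : m → ℝ) {s : ℝ} (hs : 0 < s) :
    ∫ θ, exp (-((y - X *ᵥ θ) ⬝ᵥ W *ᵥ (y - X *ᵥ θ)) / (2 * s))
      = (2 * π * s) ^ ((Fintype.card n : ℝ) / 2) * (Xᵀ * W * X).det ^ (-(1 : ℝ) / 2) *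
          exp (-glsResidualSq W X y / (2 * s)) := by
  simp_rw [exp_neg_dotProduct_mulVec_sub_mulVec_div hW hA.det_pos.ne'.isUnit]
  have hc : π / (1 / (2 * s)) = 2 * π * s := by field_simp
  rw [integral_const_mul, integral_exp_neg_mul_dotProduct_mulVec hA (by positivity), hc]
  ring

lemma integral_rpow_mul_exp_neg_dotProduct_mulVec_sub_mulVec_div (hW : Wᵀ = W)
    (hA : (Xᵀ * W * X).PosDef) (y : m → ℝ) {s : ℝ} (hs : 0 < s) (e c : ℝ) :
    ∫ θ, s ^ e * c * exp (-((y - X *ᵥ θ) ⬝ᵥ W *ᵥ (y - X *ᵥ θ)) / (2 * s))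
      = (2 * π) ^ ((Fintype.card n : ℝ) / 2) * c * (Xᵀ * W * X).det ^ (-(1 : ℝ) / 2) *
          (s ^ (e + Fintype.card n / 2) * exp (-(glsResidualSq W X y / 2) / s)) := by
  have hexp : -glsResidualSq W X y / (2 * s) = -(glsResidualSq W X y / 2) / s := by ring
  rw [integral_const_mul, integral_exp_neg_dotProduct_mulVec_sub_mulVec_div hW hA y hs, hexp,
    mul_rpow (by positivity) hs.le, rpow_add hs]
  ring

end GaussianLikelihood

theorem integrated_likelihood_formula_general
    (n q : ℕ)
    (Sg : Matrix (Fin n) (Fin n) ℝ) (hSg : Sg.PosDef)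
    (X : Matrix (Fin n) (Fin q) ℝ) (hX : X.rank = q)
    (y : Fin n → ℝ) (hy : ¬ ∃ θ : Fin q → ℝ, X.mulVec θ = y)
    (a : ℝ) (ha : 1 - ((n : ℝ) - q) / 2 < a) :
    (∫ s in Set.Ioi (0 : ℝ), ∫ θ : Fin q → ℝ,
        s ^ (-(n : ℝ) / 2 - a) * Sg.det ^ (-(1 : ℝ) / 2) *
          Real.exp (-((y - X.mulVec θ) ⬝ᵥ Sg⁻¹.mulVec (y - X.mulVec θ)) / (2 * s)))
      = (2 * Real.pi) ^ ((q : ℝ) / 2) * (2 : ℝ) ^ (((n : ℝ) - q) / 2 + a - 1) *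
        Real.Gamma (((n : ℝ) - q) / 2 + a - 1) *
        Sg.det ^ (-(1 : ℝ) / 2) * (Xᵀ * Sg⁻¹ * X).det ^ (-(1 : ℝ) / 2) *
        (y ⬝ᵥ (Sg⁻¹ * (1 - X * (Xᵀ * Sg⁻¹ * X)⁻¹ * Xᵀ * Sg⁻¹)).mulVec y) ^
          (-(((n : ℝ) - q) / 2 + a - 1)) ∧
    IntegrableOn
      (fun p : ℝ × (Fin q → ℝ) =>
        p.1 ^ (-(n : ℝ) / 2 - a) * Sg.det ^ (-(1 : ℝ) / 2) *
          Real.exp (-((y - X.mulVec p.2) ⬝ᵥ Sg⁻¹.mulVec (y - X.mulVec p.2)) / (2 * p.1)))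
      (Set.Ioi (0 : ℝ) ×ˢ (Set.univ : Set (Fin q → ℝ))) := by
  have hW : Sg⁻¹ᵀ = Sg⁻¹ := by simpa using hSg.inv.isHermitian.eq
  have hA : (Xᵀ * Sg⁻¹ * X).PosDef := by
    simpa using hSg.inv.conjTranspose_mul_mul_same (mulVec_injective_of_rank_eq_card (by simpa))
  have hS : 0 < glsResidualSq Sg⁻¹ X y :=
    glsResidualSq_pos X y hSg.inv hA.det_pos.ne'.isUnit fun θ hθ => hy ⟨θ, hθ⟩
  have hb : 0 < ((n : ℝ) - q) / 2 + a - 1 := by linarith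
  have hexp : -(n : ℝ) / 2 - a + q / 2 = -(((n : ℝ) - q) / 2 + a - 1) - 1 := by ring
  have hinner := fun s (hs : s ∈ Ioi (0 : ℝ)) =>
    integral_rpow_mul_exp_neg_dotProduct_mulVec_sub_mulVec_div hW hA y hs
      (-(n : ℝ) / 2 - a) (Sg.det ^ (-(1 : ℝ) / 2))
  simp only [Fintype.card_fin, hexp] at hinner
  rw [← glsResidualSq]
  refine ⟨?_, ?_⟩
  · rw [setIntegral_congr_fun measurableSet_Ioi hinner, integral_const_mul,
      integral_rpow_neg_sub_one_mul_exp_neg_div_Ioi hb (by positivity), div_rpow hS.le two_pos.le,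
      rpow_neg two_pos.le, div_inv_eq_mul]
    ring
  · rw [Measure.volume_eq_prod]
    refine integrableOn_prod_univ_of_nonneg measurableSet_Ioi
      (Measurable.aestronglyMeasurable (by fun_prop))
      (fun s (hs : 0 < s) θ => by have := hSg.det_pos; dsimp only; positivity) (fun s hs => ?_) ?_
    · exact (integrable_exp_neg_dotProduct_mulVec_sub_mulVec_div hW hA y hs).const_mul
        (s ^ (-(n : ℝ) / 2 - a) * Sg.det ^ (-(1 : ℝ) / 2))
    · exact (integrableOn_congr_fun hinner measurableSet_Ioi).mpr
        ((integrableOn_rpow_neg_sub_one_mul_exp_neg_div_Ioi hb (by positivity)).const_mul _)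

/-- the double integral over (σ², θ) of the (prior × likelihood) kernel. -/
theorem integrated_likelihood_formula
    (n q : ℕ) (hq : 1 ≤ q) (hnq : q < n)
    (Sg : Matrix (Fin n) (Fin n) ℝ) (hSg : Sg.PosDef)
    (X : Matrix (Fin n) (Fin q) ℝ) (hX : X.rank = q)
    (y : Fin n → ℝ) (hy : ¬ ∃ θ : Fin q → ℝ, X.mulVec θ = y)
    (a : ℝ) (ha : 1 - ((n : ℝ) - q) / 2 < a) :
    (∫ s in Set.Ioi (0 : ℝ), ∫ θ : Fin q → ℝ,
        s ^ (-(n : ℝ) / 2 - a) * Sg.det ^ (-(1 : ℝ) / 2) *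
          Real.exp (-((y - X.mulVec θ) ⬝ᵥ Sg⁻¹.mulVec (y - X.mulVec θ)) / (2 * s)))
      = (2 * Real.pi) ^ ((q : ℝ) / 2) * (2 : ℝ) ^ (((n : ℝ) - q) / 2 + a - 1) *
        Real.Gamma (((n : ℝ) - q) / 2 + a - 1) *
        Sg.det ^ (-(1 : ℝ) / 2) * (Xᵀ * Sg⁻¹ * X).det ^ (-(1 : ℝ) / 2) *
        (y ⬝ᵥ (Sg⁻¹ * (1 - X * (Xᵀ * Sg⁻¹ * X)⁻¹ * Xᵀ * Sg⁻¹)).mulVec y) ^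
          (-(((n : ℝ) - q) / 2 + a - 1)) ∧
    IntegrableOn
      (fun p : ℝ × (Fin q → ℝ) =>
        p.1 ^ (-(n : ℝ) / 2 - a) * Sg.det ^ (-(1 : ℝ) / 2) *
          Real.exp (-((y - X.mulVec p.2) ⬝ᵥ Sg⁻¹.mulVec (y - X.mulVec p.2)) / (2 * p.1)))
      (Set.Ioi (0 : ℝ) ×ˢ (Set.univ : Set (Fin q → ℝ))) :=
  integrated_likelihood_formula_general n q Sg hSg X hX y hy a ha
end

section
/- As ξ → 0⁺, the rescaled inverse ν(ξ)·Σ(ξ)^{-1} converges entrywise to G = D^{-1} − D^{-1}11'D^{-1}/(1'D^{-1}1). -/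
/-!
Writing `Σ(ξ) = 11' + ν(ξ) M(ξ)` with `M = D + E`, the Sherman–Morrison formula gives
`ν Σ⁻¹ = M⁻¹ - M⁻¹11'M⁻¹ / (ν + 1'M⁻¹1)`. The right-hand side still makes sense at `ν = 0`,
depends continuously on `(M, ν)` near `(D, 0)`, and equals `G` there.
-/

open Matrix Filter Topology

/-- The all-ones vector. -/
def ones (n : ℕ) : Fin n → ℝ := fun _ => 1

/-- G = D⁻¹ − D⁻¹11'D⁻¹/(1'D⁻¹1). -/
noncomputable def Gmat {n : ℕ} (D : Matrix (Fin n) (Fin n) ℝ) : Matrix (Fin n) (Fin n) ℝ :=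
  D⁻¹ - (ones n ⬝ᵥ D⁻¹.mulVec (ones n))⁻¹ • (D⁻¹ * vecMulVec (ones n) (ones n) * D⁻¹)

namespace Matrix

theorem vecMulVec_mul_mul_vecMulVec {ι R : Type*} [Fintype ι] [CommSemiring R]
    (u v w x : ι → R) (P : Matrix ι ι R) :
    vecMulVec u v * P * vecMulVec w x = (v ⬝ᵥ P *ᵥ w) • vecMulVec u x := by
  rw [vecMulVec_mul, vecMulVec_mul_vecMulVec, ← dotProduct_mulVec, vecMulVec_smul]

variable {ι K : Type*} [Fintype ι] [DecidableEq ι] [Field K]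

/-- For `ν ≠ 0` this is `ν • (vecMulVec u v + ν • M)⁻¹ = (M + ν⁻¹ • vecMulVec u v)⁻¹`, but the
formula stays meaningful at `ν = 0`. -/
noncomputable def shermanMorrison (M : Matrix ι ι K) (u v : ι → K) (ν : K) : Matrix ι ι K :=
  M⁻¹ - (ν + v ⬝ᵥ M⁻¹ *ᵥ u)⁻¹ • (M⁻¹ * vecMulVec u v * M⁻¹)

theorem vecMulVec_add_smul_mul_shermanMorrison {M : Matrix ι ι K} (hM : IsUnit M.det)
    (u v : ι → K) {ν : K} (hc : ν + v ⬝ᵥ M⁻¹ *ᵥ u ≠ 0) :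
    (vecMulVec u v + ν • M) * shermanMorrison M u v ν = ν • 1 := by
  set c := ν + v ⬝ᵥ M⁻¹ *ᵥ u
  have hMP : M * M⁻¹ = 1 := mul_nonsing_inv M hM
  have hMPVP : M * (M⁻¹ * vecMulVec u v * M⁻¹) = vecMulVec u v * M⁻¹ := by
    rw [mul_assoc, ← mul_assoc, hMP, one_mul]
  have hVPVP : vecMulVec u v * (M⁻¹ * vecMulVec u v * M⁻¹)
      = (v ⬝ᵥ M⁻¹ *ᵥ u) • (vecMulVec u v * M⁻¹) := by
    rw [← mul_assoc, ← mul_assoc, vecMulVec_mul_mul_vecMulVec, smul_mul_assoc]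
  calc (vecMulVec u v + ν • M) * shermanMorrison M u v ν
      = ν • 1 + (1 - c⁻¹ * c) • (vecMulVec u v * M⁻¹) := by
        simp only [shermanMorrison, add_mul, mul_sub, smul_mul_assoc, mul_smul_comm, hMP, hMPVP,
          hVPVP, c]
        module
    _ = ν • 1 := by rw [inv_mul_cancel₀ hc, sub_self, zero_smul, add_zero]

theorem smul_inv_vecMulVec_add_smul {M : Matrix ι ι K} (hM : IsUnit M.det)
    (u v : ι → K) {ν : K} (hν : ν ≠ 0) (hc : ν + v ⬝ᵥ M⁻¹ *ᵥ u ≠ 0) :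
    ν • (vecMulVec u v + ν • M)⁻¹ = shermanMorrison M u v ν := by
  rw [inv_eq_right_inv (B := ν⁻¹ • shermanMorrison M u v ν), smul_smul, mul_inv_cancel₀ hν,
    one_smul]
  rw [mul_smul_comm, vecMulVec_add_smul_mul_shermanMorrison hM u v hc, smul_smul,
    inv_mul_cancel₀ hν, one_smul]

end Matrix

theorem Filter.Tendsto.dotProduct_mulVec {α ι R : Type*} [Fintype ι] [CommSemiring R]
    [TopologicalSpace R] [IsTopologicalSemiring R] {l : Filter α} {M : α → Matrix ι ι R}
    {D : Matrix ι ι R} (hM : Tendsto M l (𝓝 D)) (u v : ι → R) :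
    Tendsto (fun a => v ⬝ᵥ M a *ᵥ u) l (𝓝 (v ⬝ᵥ D *ᵥ u)) :=
  ((continuous_const.dotProduct (continuous_id.matrix_mulVec continuous_const)).tendsto D).comp hM

section Limits

variable {α ι K : Type*} [Fintype ι] [DecidableEq ι] [Field K] [TopologicalSpace K]
  [IsTopologicalDivisionRing K] {l : Filter α} {M : α → Matrix ι ι K} {D : Matrix ι ι K}

theorem Filter.Tendsto.matrix_inv (hM : Tendsto M l (𝓝 D)) (hD : IsUnit D.det) :
    Tendsto (fun a => (M a)⁻¹) l (𝓝 D⁻¹) := by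
  refine (continuousAt_matrix_inv D ?_).tendsto.comp hM
  rw [Ring.inverse_eq_inv']
  exact continuousAt_inv₀ (isUnit_iff_ne_zero.mp hD)

theorem Filter.Tendsto.shermanMorrison {ν : α → K} {ν₀ : K} (hM : Tendsto M l (𝓝 D))
    (hν : Tendsto ν l (𝓝 ν₀)) (hD : IsUnit D.det) (u v : ι → K)
    (hc : ν₀ + v ⬝ᵥ D⁻¹ *ᵥ u ≠ 0) :
    Tendsto (fun a => shermanMorrison (M a) u v (ν a)) l (𝓝 (shermanMorrison D u v ν₀)) := by
  have hinv := hM.matrix_inv hD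
  exact hinv.sub (((hν.add (hinv.dotProduct_mulVec u v)).inv₀ hc).smul
    ((hinv.mul tendsto_const_nhds).mul hinv))

end Limits

theorem Gmat_eq_shermanMorrison {n : ℕ} (D : Matrix (Fin n) (Fin n) ℝ) :
    Gmat D = shermanMorrison D (ones n) (ones n) 0 := by
  rw [Gmat, shermanMorrison, zero_add]

theorem rescaled_inverse_tendsto_G_general
    (n : ℕ)
    (D : Matrix (Fin n) (Fin n) ℝ) (hDdet : IsUnit D.det)
    (hD1 : ones n ⬝ᵥ D⁻¹.mulVec (ones n) ≠ 0)
    (ν : ℝ → ℝ) (hνpos : ∀ ξ > 0, 0 < ν ξ)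
    (hν0 : Tendsto ν (𝓝[>] 0) (𝓝 0))
    (Sg : ℝ → Matrix (Fin n) (Fin n) ℝ)
    (E : ℝ → Matrix (Fin n) (Fin n) ℝ)
    (hE : ∀ i j, Tendsto (fun ξ => E ξ i j) (𝓝[>] 0) (𝓝 0))
    (hdecomp : ∀ ξ > 0, Sg ξ = vecMulVec (ones n) (ones n) + ν ξ • (D + E ξ)) :
    ∀ i j, Tendsto (fun ξ => ν ξ * (Sg ξ)⁻¹ i j) (𝓝[>] 0) (𝓝 (Gmat D i j)) := by
  have hM : Tendsto (fun ξ => D + E ξ) (𝓝[>] 0) (𝓝 D) := by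
    have hE0 : Tendsto E (𝓝[>] 0) (𝓝 0) := tendsto_pi_nhds.2 fun i => tendsto_pi_nhds.2 (hE i)
    simpa using (tendsto_const_nhds (x := D)).add hE0
  have hc0 : 0 + ones n ⬝ᵥ D⁻¹ *ᵥ ones n ≠ 0 := by rwa [zero_add]
  have hdet : ∀ᶠ ξ in 𝓝[>] 0, IsUnit (D + E ξ).det :=
    ((((continuous_id.matrix_det).tendsto D).comp hM).eventually_ne hDdet.ne_zero).mono
      fun _ h => h.isUnit
  have hc : ∀ᶠ ξ in 𝓝[>] 0, ν ξ + ones n ⬝ᵥ (D + E ξ)⁻¹ *ᵥ ones n ≠ 0 :=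
    (hν0.add ((hM.matrix_inv hDdet).dotProduct_mulVec _ _)).eventually_ne hc0
  have hSg : ∀ᶠ ξ in 𝓝[>] 0,
      shermanMorrison (D + E ξ) (ones n) (ones n) (ν ξ) = ν ξ • (Sg ξ)⁻¹ := by
    filter_upwards [hdet, hc, self_mem_nhdsWithin] with ξ hdetξ hcξ hξ
    rw [hdecomp ξ hξ, smul_inv_vecMulVec_add_smul hdetξ _ _ (hνpos ξ hξ).ne' hcξ]
  have hlim := (hM.shermanMorrison hν0 hDdet (ones n) (ones n) hc0).congr' hSg
  rw [← Gmat_eq_shermanMorrison] at hlim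
  exact fun i j => tendsto_pi_nhds.1 (tendsto_pi_nhds.1 hlim i) j

/-- as ξ → 0⁺, ν(ξ)·Σ(ξ)⁻¹ converges entrywise to G. -/
theorem rescaled_inverse_tendsto_G
    (n : ℕ) (hn : 2 ≤ n)
    (D : Matrix (Fin n) (Fin n) ℝ) (hDsymm : D.IsSymm) (hDdet : IsUnit D.det)
    (hD1 : ones n ⬝ᵥ D⁻¹.mulVec (ones n) ≠ 0)
    (ν : ℝ → ℝ) (hνpos : ∀ ξ > 0, 0 < ν ξ)
    (hν0 : Tendsto ν (𝓝[>] 0) (𝓝 0))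
    (Sg : ℝ → Matrix (Fin n) (Fin n) ℝ) (hpd : ∀ ξ > 0, (Sg ξ).PosDef)
    (E : ℝ → Matrix (Fin n) (Fin n) ℝ)
    (hE : ∀ i j, Tendsto (fun ξ => E ξ i j) (𝓝[>] 0) (𝓝 0))
    (hdecomp : ∀ ξ > 0, Sg ξ = vecMulVec (ones n) (ones n) + ν ξ • (D + E ξ)) :
    ∀ i j, Tendsto (fun ξ => ν ξ * (Sg ξ)⁻¹ i j) (𝓝[>] 0) (𝓝 (Gmat D i j)) :=
  rescaled_inverse_tendsto_G_general n D hDdet hD1 ν hνpos hν0 Sg E hE hdecomp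
end

section
/- As ξ → 0⁺, the determinant satisfies det Σ(ξ) / ν(ξ)^{n−1} → det(D) · (1'D^{-1}1); that is, det Σ(ξ) = ν(ξ)^{n−1} det(D)(1'D^{-1}1)(1 + o(1)). -/
/-!
By the matrix determinant lemma, `det (1 1ᵀ + c A) = c ^ n det A + c ^ (n - 1) 1ᵀ (adj A) 1`
whenever `c ≠ 0` and `A` is invertible, so that `det Σ(ξ) / ν(ξ) ^ (n - 1)` equals
`ν(ξ) det (D + E(ξ)) + 1ᵀ adj (D + E(ξ)) 1`. Both terms are continuous in `(ν, D + E)`; at the limit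
`(0, D)` this is `1ᵀ (adj D) 1 = det D · 1ᵀ D⁻¹ 1`.
-/

open Matrix Filter Topology

namespace Matrix

variable {m α : Type*} [Fintype m] [DecidableEq m]

theorem adjugate_mulVec_of_isUnit [CommRing α] {A : Matrix m m α} (hA : IsUnit A.det)
    (u : m → α) : A.adjugate *ᵥ u = A.det • A⁻¹ *ᵥ u := by
  rw [← cramer_eq_adjugate_mulVec, det_smul_inv_mulVec_eq_cramer A u hA]

theorem det_add_vecMulVec [CommRing α] {A : Matrix m m α} (hA : IsUnit A.det) (u v : m → α) :
    (A + vecMulVec u v).det = A.det + v ⬝ᵥ A.adjugate *ᵥ u := by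
  rw [vecMulVec_eq Unit, det_add_replicateCol_mul_replicateRow hA,
    det_unique (1 + _ : Matrix Unit Unit α), add_apply, one_apply_eq, Matrix.mul_assoc,
    ← replicateCol_mulVec, replicateRow_mul_replicateCol_apply, adjugate_mulVec_of_isUnit hA,
    dotProduct_smul, smul_eq_mul, mul_one_add]

theorem det_vecMulVec_add_smul [Field α] {A : Matrix m m α} (hA : IsUnit A.det) {c : α}
    (hc : c ≠ 0) (u v : m → α) :
    (vecMulVec u v + c • A).det
      = c ^ Fintype.card m * A.det + c ^ (Fintype.card m - 1) * (v ⬝ᵥ A.adjugate *ᵥ u) := by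
  have hcA : IsUnit (c • A).det := by
    rw [det_smul]; exact (isUnit_iff_ne_zero.mpr (pow_ne_zero _ hc)).mul hA
  rw [add_comm, det_add_vecMulVec hcA, det_smul, adjugate_smul, smul_mulVec, dotProduct_smul,
    smul_eq_mul]

theorem det_vecMulVec_add_smul_div_pow [Field α] [Nonempty m] {A : Matrix m m α}
    (hA : IsUnit A.det) {c : α} (hc : c ≠ 0) (u v : m → α) :
    (vecMulVec u v + c • A).det / c ^ (Fintype.card m - 1) = c * A.det + v ⬝ᵥ A.adjugate *ᵥ u := by
  have hpow : c ^ Fintype.card m = c * c ^ (Fintype.card m - 1) := by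
    rw [← pow_succ', Nat.sub_add_cancel Fintype.card_pos]
  rw [det_vecMulVec_add_smul hA hc, hpow]
  field_simp

end Matrix

theorem det_asymptotics_general
    (n : ℕ) (hn : 2 ≤ n)
    (D : Matrix (Fin n) (Fin n) ℝ) (hDdet : IsUnit D.det)
    (ν : ℝ → ℝ) (hνpos : ∀ ξ > 0, 0 < ν ξ)
    (hν0 : Tendsto ν (𝓝[>] 0) (𝓝 0))
    (Sg : ℝ → Matrix (Fin n) (Fin n) ℝ)
    (E : ℝ → Matrix (Fin n) (Fin n) ℝ)
    (hE : ∀ i j, Tendsto (fun ξ => E ξ i j) (𝓝[>] 0) (𝓝 0))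
    (hdecomp : ∀ ξ > 0, Sg ξ = vecMulVec (ones n) (ones n) + ν ξ • (D + E ξ)) :
    Tendsto (fun ξ => (Sg ξ).det / ν ξ ^ (n - 1)) (𝓝[>] 0)
      (𝓝 (D.det * (ones n ⬝ᵥ D⁻¹.mulVec (ones n)))) := by
  have : Nonempty (Fin n) := ⟨⟨0, by omega⟩⟩
  have hM : Tendsto (fun ξ => D + E ξ) (𝓝[>] 0) (𝓝 D) :=
    tendsto_pi_nhds.2 fun i => tendsto_pi_nhds.2 fun j => by
      simpa using (hE i j).const_add (D i j)
  have hunit : ∀ᶠ ξ in 𝓝[>] 0, IsUnit (D + E ξ).det :=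
    ((continuous_id.matrix_det.tendsto D).comp hM).eventually_ne hDdet.ne_zero |>.mono
      fun _ => isUnit_iff_ne_zero.2
  have hcont : Continuous fun p : ℝ × Matrix (Fin n) (Fin n) ℝ =>
      p.1 * p.2.det + ones n ⬝ᵥ p.2.adjugate *ᵥ ones n := by fun_prop
  have hlim := (hcont.tendsto (0, D)).comp (hν0.prodMk_nhds hM)
  rw [zero_mul, zero_add, adjugate_mulVec_of_isUnit hDdet, dotProduct_smul, smul_eq_mul] at hlim
  refine hlim.congr' ?_
  filter_upwards [hunit, self_mem_nhdsWithin] with ξ hξunit hξ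
  have hquot := det_vecMulVec_add_smul_div_pow hξunit (hνpos ξ hξ).ne' (ones n) (ones n)
  rw [Fintype.card_fin] at hquot
  rw [hdecomp ξ hξ, hquot, Function.comp_apply]

/-- as ξ → 0⁺, det Σ(ξ) / ν(ξ)^{n−1} → det(D)·(1'D⁻¹1). -/
theorem det_asymptotics
    (n : ℕ) (hn : 2 ≤ n)
    (D : Matrix (Fin n) (Fin n) ℝ) (hDsymm : D.IsSymm) (hDdet : IsUnit D.det)
    (hD1 : ones n ⬝ᵥ D⁻¹.mulVec (ones n) ≠ 0)
    (ν : ℝ → ℝ) (hνpos : ∀ ξ > 0, 0 < ν ξ)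
    (hν0 : Tendsto ν (𝓝[>] 0) (𝓝 0))
    (Sg : ℝ → Matrix (Fin n) (Fin n) ℝ) (hpd : ∀ ξ > 0, (Sg ξ).PosDef)
    (E : ℝ → Matrix (Fin n) (Fin n) ℝ)
    (hE : ∀ i j, Tendsto (fun ξ => E ξ i j) (𝓝[>] 0) (𝓝 0))
    (hdecomp : ∀ ξ > 0, Sg ξ = vecMulVec (ones n) (ones n) + ν ξ • (D + E ξ)) :
    Tendsto (fun ξ => (Sg ξ).det / ν ξ ^ (n - 1)) (𝓝[>] 0)
      (𝓝 (D.det * (ones n ⬝ᵥ D⁻¹.mulVec (ones n)))) :=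
  det_asymptotics_general n hn D hDdet ν hνpos hν0 Sg E hE hdecomp
end

section
/- As ξ → 0⁺: (i) 1'Σ(ξ)^{-1}1 → 1; and (ii) for any X ∈ ℝⁿ with X'GX ≠ 0, ν(ξ)·X'Σ(ξ)^{-1}X → X'D^{-1}X − (1'D^{-1}X)²/(1'D^{-1}1) = X'GX. -/
/-!
Write `A = D + E(ξ)` and `t = ν(ξ)`, so that `Σ = t A + 11'` is a rank-one update of `t A`.
By the Sherman–Morrison formula, for all vectors `x, y`,
`t · x'Σ⁻¹y = x'A⁻¹y − (x'A⁻¹1)(1'A⁻¹y) / (t + 1'A⁻¹1)`.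
As `ξ → 0⁺` we have `t → 0` and `A⁻¹ → D⁻¹`, and `1'D⁻¹1 ≠ 0` keeps the denominator away
from zero; this gives (ii). For `x = y = 1` the identity says `1'Σ⁻¹1 = a / (t + a)` with
`a = 1'A⁻¹1 → 1'D⁻¹1`, which gives (i).
-/

open Matrix Filter Topology

namespace Matrix

theorem IsSymm.dotProduct_mulVec_comm {ι R : Type*} [Fintype ι] [CommSemiring R]
    {M : Matrix ι ι R} (hM : M.IsSymm) (x y : ι → R) :
    x ⬝ᵥ M *ᵥ y = y ⬝ᵥ M *ᵥ x := by
  rw [dotProduct_mulVec, ← mulVec_transpose, hM.eq, dotProduct_comm]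

section ShermanMorrison

variable {ι 𝕜 : Type*} [Fintype ι] [DecidableEq ι] [Field 𝕜] {A : Matrix ι ι 𝕜} {u v : ι → 𝕜}

theorem add_vecMulVec_inv_eq_sub (hA : IsUnit A.det) (h : 1 + v ⬝ᵥ A⁻¹ *ᵥ u ≠ 0) :
    (A + vecMulVec u v)⁻¹ =
      A⁻¹ - (1 + v ⬝ᵥ A⁻¹ *ᵥ u)⁻¹ • vecMulVec (A⁻¹ *ᵥ u) (v ᵥ* A⁻¹) := by
  refine inv_eq_right_inv ?_
  have hAu : A *ᵥ (A⁻¹ *ᵥ u) = u := by rw [mulVec_mulVec, mul_nonsing_inv _ hA, one_mulVec]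
  rw [add_mul, mul_sub, mul_sub, mul_nonsing_inv _ hA, Matrix.mul_smul, Matrix.mul_smul,
    mul_vecMulVec, hAu, vecMulVec_mul, vecMulVec_mul_vecMulVec, vecMulVec_smul]
  linear_combination (norm := module) -(inv_mul_cancel₀ h • vecMulVec u (v ᵥ* A⁻¹))

theorem dotProduct_add_vecMulVec_inv_mulVec (hA : IsUnit A.det) (h : 1 + v ⬝ᵥ A⁻¹ *ᵥ u ≠ 0)
    (x y : ι → 𝕜) :
    x ⬝ᵥ (A + vecMulVec u v)⁻¹ *ᵥ y =
      x ⬝ᵥ A⁻¹ *ᵥ y - (x ⬝ᵥ A⁻¹ *ᵥ u) * (v ⬝ᵥ A⁻¹ *ᵥ y) / (1 + v ⬝ᵥ A⁻¹ *ᵥ u) := by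
  rw [add_vecMulVec_inv_eq_sub hA h, sub_mulVec, smul_mulVec, vecMulVec_mulVec,
    ← dotProduct_mulVec]
  simp only [dotProduct_sub, dotProduct_smul, MulOpposite.smul_eq_mul_unop, MulOpposite.unop_op,
    smul_eq_mul]
  ring

theorem mul_dotProduct_smul_add_vecMulVec_inv_mulVec (hA : IsUnit A.det) {t : 𝕜} (ht : t ≠ 0)
    (h : t + v ⬝ᵥ A⁻¹ *ᵥ u ≠ 0) (x y : ι → 𝕜) :
    t * (x ⬝ᵥ (t • A + vecMulVec u v)⁻¹ *ᵥ y) =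
      x ⬝ᵥ A⁻¹ *ᵥ y - (x ⬝ᵥ A⁻¹ *ᵥ u) * (v ⬝ᵥ A⁻¹ *ᵥ y) / (t + v ⬝ᵥ A⁻¹ *ᵥ u) := by
  have htA : IsUnit (t • A).det := by
    rw [det_smul]
    exact (ht.isUnit.pow _).mul hA
  have htA_inv : (t • A)⁻¹ = t⁻¹ • A⁻¹ := inv_smul' A (Units.mk0 t ht) hA
  have h' : 1 + v ⬝ᵥ (t • A)⁻¹ *ᵥ u = t⁻¹ * (t + v ⬝ᵥ A⁻¹ *ᵥ u) := by
    rw [htA_inv, smul_mulVec, dotProduct_smul, smul_eq_mul, mul_add, inv_mul_cancel₀ ht]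
  rw [dotProduct_add_vecMulVec_inv_mulVec htA (h' ▸ mul_ne_zero (inv_ne_zero ht) h), h',
    htA_inv]
  simp only [smul_mulVec, dotProduct_smul, smul_eq_mul]
  field_simp

end ShermanMorrison

section Limits

variable {ι 𝕜 α : Type*} [Fintype ι] [DecidableEq ι] [Field 𝕜] [TopologicalSpace 𝕜]
  [IsTopologicalDivisionRing 𝕜] {l : Filter α} {A : α → Matrix ι ι 𝕜} {D : Matrix ι ι 𝕜}

theorem tendsto_dotProduct_inv_mulVec (hA : Tendsto A l (𝓝 D)) (hD : IsUnit D.det)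
    (x y : ι → 𝕜) :
    Tendsto (fun a => x ⬝ᵥ (A a)⁻¹ *ᵥ y) l (𝓝 (x ⬝ᵥ D⁻¹ *ᵥ y)) := by
  have hinv : ContinuousAt Inv.inv D := continuousAt_matrix_inv D <| by
    rw [Ring.inverse_eq_inv']
    exact continuousAt_inv₀ hD.ne_zero
  have hform : Continuous fun M : Matrix ι ι 𝕜 => x ⬝ᵥ M *ᵥ y := by fun_prop
  exact hform.continuousAt.tendsto.comp (hinv.tendsto.comp hA)

variable [T1Space 𝕜] {t : α → 𝕜} {u v : ι → 𝕜}

theorem eventually_add_dotProduct_inv_mulVec_ne_zero (hA : Tendsto A l (𝓝 D))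
    (hD : IsUnit D.det) (ht0 : Tendsto t l (𝓝 0)) (hvu : v ⬝ᵥ D⁻¹ *ᵥ u ≠ 0) :
    ∀ᶠ a in l, t a + v ⬝ᵥ (A a)⁻¹ *ᵥ u ≠ 0 := by
  refine (ht0.add (tendsto_dotProduct_inv_mulVec hA hD v u)).eventually_ne ?_
  rwa [zero_add]

theorem eventually_mul_dotProduct_smul_add_vecMulVec_inv_mulVec (hA : Tendsto A l (𝓝 D))
    (hD : IsUnit D.det) (ht0 : Tendsto t l (𝓝 0)) (ht : ∀ᶠ a in l, t a ≠ 0)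
    (hvu : v ⬝ᵥ D⁻¹ *ᵥ u ≠ 0) :
    ∀ᶠ a in l, ∀ x y : ι → 𝕜, t a * (x ⬝ᵥ (t a • A a + vecMulVec u v)⁻¹ *ᵥ y) =
      x ⬝ᵥ (A a)⁻¹ *ᵥ y - (x ⬝ᵥ (A a)⁻¹ *ᵥ u) * (v ⬝ᵥ (A a)⁻¹ *ᵥ y) /
        (t a + v ⬝ᵥ (A a)⁻¹ *ᵥ u) := by
  have hdet : ∀ᶠ a in l, (A a).det ≠ 0 :=
    ((continuous_id.matrix_det.tendsto D).comp hA).eventually_ne hD.ne_zero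
  filter_upwards [ht, hdet, eventually_add_dotProduct_inv_mulVec_ne_zero hA hD ht0 hvu]
    with a hta hdeta hdena x y
  exact mul_dotProduct_smul_add_vecMulVec_inv_mulVec hdeta.isUnit hta hdena x y

theorem tendsto_mul_dotProduct_smul_add_vecMulVec_inv_mulVec (hA : Tendsto A l (𝓝 D))
    (hD : IsUnit D.det) (ht0 : Tendsto t l (𝓝 0)) (ht : ∀ᶠ a in l, t a ≠ 0)
    (hvu : v ⬝ᵥ D⁻¹ *ᵥ u ≠ 0) (x y : ι → 𝕜) :
    Tendsto (fun a => t a * (x ⬝ᵥ (t a • A a + vecMulVec u v)⁻¹ *ᵥ y)) l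
      (𝓝 (x ⬝ᵥ D⁻¹ *ᵥ y - (x ⬝ᵥ D⁻¹ *ᵥ u) * (v ⬝ᵥ D⁻¹ *ᵥ y) / (v ⬝ᵥ D⁻¹ *ᵥ u))) := by
  have hlim := fun x y => tendsto_dotProduct_inv_mulVec hA hD x y
  have hden := ht0.add (hlim v u)
  rw [zero_add] at hden
  refine Tendsto.congr' ?_ ((hlim x y).sub (((hlim x u).mul (hlim v y)).div hden hvu))
  filter_upwards [eventually_mul_dotProduct_smul_add_vecMulVec_inv_mulVec hA hD ht0 ht hvu]
    with a ha
  exact (ha x y).symm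

theorem tendsto_dotProduct_smul_add_vecMulVec_inv_mulVec_nhds_one (hA : Tendsto A l (𝓝 D))
    (hD : IsUnit D.det) (ht0 : Tendsto t l (𝓝 0)) (ht : ∀ᶠ a in l, t a ≠ 0)
    (hvu : v ⬝ᵥ D⁻¹ *ᵥ u ≠ 0) :
    Tendsto (fun a => v ⬝ᵥ (t a • A a + vecMulVec u v)⁻¹ *ᵥ u) l (𝓝 1) := by
  have hlim := tendsto_dotProduct_inv_mulVec hA hD v u
  have hden := ht0.add hlim
  rw [zero_add] at hden
  rw [← div_self hvu]
  refine Tendsto.congr' ?_ (hlim.div hden hvu)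
  filter_upwards [eventually_mul_dotProduct_smul_add_vecMulVec_inv_mulVec hA hD ht0 ht hvu, ht,
    eventually_add_dotProduct_inv_mulVec_ne_zero hA hD ht0 hvu] with a ha hta hdena
  rw [Pi.div_apply, div_eq_iff hdena]
  refine mul_left_cancel₀ hta ?_
  rw [← mul_assoc, ha v u]
  field_simp
  ring

end Limits

end Matrix

theorem dotProduct_Gmat_mulVec {n : ℕ} {D : Matrix (Fin n) (Fin n) ℝ} (hD : D.IsSymm)
    (X : Fin n → ℝ) :
    X ⬝ᵥ Gmat D *ᵥ X =
      X ⬝ᵥ D⁻¹ *ᵥ X - (ones n ⬝ᵥ D⁻¹ *ᵥ X) ^ 2 / (ones n ⬝ᵥ D⁻¹ *ᵥ ones n) := by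
  rw [Gmat, sub_mulVec, dotProduct_sub, smul_mulVec, dotProduct_smul, smul_eq_mul,
    mul_vecMulVec, vecMulVec_mul, vecMulVec_mulVec, dotProduct_smul,
    MulOpposite.smul_eq_mul_unop, MulOpposite.unop_op, ← dotProduct_mulVec,
    hD.inv.dotProduct_mulVec_comm X (ones n)]
  ring

theorem quadratic_form_asymptotics_general
    (n : ℕ)
    (D : Matrix (Fin n) (Fin n) ℝ) (hDsymm : D.IsSymm) (hDdet : IsUnit D.det)
    (hD1 : ones n ⬝ᵥ D⁻¹.mulVec (ones n) ≠ 0)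
    (ν : ℝ → ℝ) (hνpos : ∀ ξ > 0, 0 < ν ξ)
    (hν0 : Tendsto ν (𝓝[>] 0) (𝓝 0))
    (Sg : ℝ → Matrix (Fin n) (Fin n) ℝ)
    (E : ℝ → Matrix (Fin n) (Fin n) ℝ)
    (hE : ∀ i j, Tendsto (fun ξ => E ξ i j) (𝓝[>] 0) (𝓝 0))
    (hdecomp : ∀ ξ > 0, Sg ξ = vecMulVec (ones n) (ones n) + ν ξ • (D + E ξ)) :
    Tendsto (fun ξ => ones n ⬝ᵥ (Sg ξ)⁻¹.mulVec (ones n)) (𝓝[>] 0) (𝓝 1) ∧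
    ∀ X : Fin n → ℝ, X ⬝ᵥ (Gmat D).mulVec X ≠ 0 →
      Tendsto (fun ξ => ν ξ * (X ⬝ᵥ (Sg ξ)⁻¹.mulVec X)) (𝓝[>] 0)
        (𝓝 (X ⬝ᵥ D⁻¹.mulVec X -
          (ones n ⬝ᵥ D⁻¹.mulVec X) ^ 2 / (ones n ⬝ᵥ D⁻¹.mulVec (ones n)))) ∧
      X ⬝ᵥ D⁻¹.mulVec X -
          (ones n ⬝ᵥ D⁻¹.mulVec X) ^ 2 / (ones n ⬝ᵥ D⁻¹.mulVec (ones n))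
        = X ⬝ᵥ (Gmat D).mulVec X := by
  have hE' : Tendsto E (𝓝[>] 0) (𝓝 0) := tendsto_pi_nhds.2 fun i => tendsto_pi_nhds.2 (hE i)
  have hA : Tendsto (fun ξ => D + E ξ) (𝓝[>] 0) (𝓝 D) := by
    simpa using tendsto_const_nhds.add hE'
  have hν : ∀ᶠ ξ in 𝓝[>] 0, ν ξ ≠ 0 :=
    eventually_mem_nhdsWithin.mono fun ξ hξ => (hνpos ξ hξ).ne'
  have hSg : ∀ᶠ ξ in 𝓝[>] 0, Sg ξ = ν ξ • (D + E ξ) + vecMulVec (ones n) (ones n) :=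
    eventually_mem_nhdsWithin.mono fun ξ hξ => (hdecomp ξ hξ).trans (add_comm _ _)
  refine ⟨?_, fun X _ => ⟨?_, (dotProduct_Gmat_mulVec hDsymm X).symm⟩⟩
  · exact (tendsto_dotProduct_smul_add_vecMulVec_inv_mulVec_nhds_one hA hDdet hν0 hν hD1).congr'
      (hSg.mono fun ξ h => by simp only [h])
  · have hlim := tendsto_mul_dotProduct_smul_add_vecMulVec_inv_mulVec hA hDdet hν0 hν hD1 X X
    rw [hDsymm.inv.dotProduct_mulVec_comm X (ones n), ← sq] at hlim
    exact hlim.congr' (hSg.mono fun ξ h => by simp only [h])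

/-- as ξ → 0⁺, (i) 1'Σ(ξ)⁻¹1 → 1; (ii) for X with X'GX ≠ 0,
ν(ξ)·X'Σ(ξ)⁻¹X → X'D⁻¹X − (1'D⁻¹X)²/(1'D⁻¹1) = X'GX. -/
theorem quadratic_form_asymptotics
    (n : ℕ) (hn : 2 ≤ n)
    (D : Matrix (Fin n) (Fin n) ℝ) (hDsymm : D.IsSymm) (hDdet : IsUnit D.det)
    (hD1 : ones n ⬝ᵥ D⁻¹.mulVec (ones n) ≠ 0)
    (ν : ℝ → ℝ) (hνpos : ∀ ξ > 0, 0 < ν ξ)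
    (hν0 : Tendsto ν (𝓝[>] 0) (𝓝 0))
    (Sg : ℝ → Matrix (Fin n) (Fin n) ℝ) (hpd : ∀ ξ > 0, (Sg ξ).PosDef)
    (E : ℝ → Matrix (Fin n) (Fin n) ℝ)
    (hE : ∀ i j, Tendsto (fun ξ => E ξ i j) (𝓝[>] 0) (𝓝 0))
    (hdecomp : ∀ ξ > 0, Sg ξ = vecMulVec (ones n) (ones n) + ν ξ • (D + E ξ)) :
    Tendsto (fun ξ => ones n ⬝ᵥ (Sg ξ)⁻¹.mulVec (ones n)) (𝓝[>] 0) (𝓝 1) ∧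
    ∀ X : Fin n → ℝ, X ⬝ᵥ (Gmat D).mulVec X ≠ 0 →
      Tendsto (fun ξ => ν ξ * (X ⬝ᵥ (Sg ξ)⁻¹.mulVec X)) (𝓝[>] 0)
        (𝓝 (X ⬝ᵥ D⁻¹.mulVec X -
          (ones n ⬝ᵥ D⁻¹.mulVec X) ^ 2 / (ones n ⬝ᵥ D⁻¹.mulVec (ones n)))) ∧
      X ⬝ᵥ D⁻¹.mulVec X -
          (ones n ⬝ᵥ D⁻¹.mulVec X) ^ 2 / (ones n ⬝ᵥ D⁻¹.mulVec (ones n))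
        = X ⬝ᵥ (Gmat D).mulVec X :=
  quadratic_form_asymptotics_general n D hDsymm hDdet hD1 ν hνpos hν0 Sg E hE hdecomp
end

section
/- As ξ → 0⁺, the projection-type matrix Φ(ξ) = Σ(ξ)^{-1}1(1'Σ(ξ)^{-1}1)^{-1}1'Σ(ξ)^{-1} converges entrywise to F = D^{-1}11'D^{-1}/(1'D^{-1}1)². -/
open Matrix Filter Topology

/-!
If `S = u w' + t M` with `M` invertible, then `S M⁻¹u = c u` and `w'M⁻¹S = c w'` for the scalar
`c = w'M⁻¹u + t`, so `S⁻¹u` and `w'S⁻¹` are `M⁻¹u` and `w'M⁻¹` rescaled by `c⁻¹`. Hence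
`Φ(S) = (w'S⁻¹u)⁻¹ S⁻¹uw'S⁻¹ = (w'M⁻¹u · c)⁻¹ M⁻¹uw'M⁻¹`, an expression that is continuous in
`(M, t)` at `(D, 0)`; with `M = D + E(ξ)` and `t = ν(ξ)` its limit is `F`.
-/

namespace Matrix

variable {ι 𝕜 : Type*} [Fintype ι] [DecidableEq ι]

section Algebra

variable [Field 𝕜] {S M : Matrix ι ι 𝕜} {u w : ι → 𝕜} {t : 𝕜}

/-- The paper's `Φ(ξ)` is `projectionMatrix (Σ ξ) 1 1`. -/
noncomputable def projectionMatrix (S : Matrix ι ι 𝕜) (u w : ι → 𝕜) : Matrix ι ι 𝕜 :=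
  (w ⬝ᵥ S⁻¹ *ᵥ u)⁻¹ • (S⁻¹ * vecMulVec u w * S⁻¹)

theorem inv_mulVec_of_eq_vecMulVec_add_smul (hS : IsUnit S.det) (hM : IsUnit M.det)
    (hSM : S = vecMulVec u w + t • M) (hc : w ⬝ᵥ M⁻¹ *ᵥ u + t ≠ 0) :
    S⁻¹ *ᵥ u = (w ⬝ᵥ M⁻¹ *ᵥ u + t)⁻¹ • (M⁻¹ *ᵥ u) := by
  have hSMu : S *ᵥ (M⁻¹ *ᵥ u) = (w ⬝ᵥ M⁻¹ *ᵥ u + t) • u := by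
    rw [hSM, add_mulVec, vecMulVec_mulVec, smul_mulVec, mulVec_mulVec, mul_nonsing_inv _ hM,
      one_mulVec, add_smul, op_smul_eq_smul]
  rw [eq_inv_smul_iff₀ hc, ← mulVec_smul, ← hSMu, mulVec_mulVec, nonsing_inv_mul _ hS,
    one_mulVec]

theorem vecMul_inv_of_eq_vecMulVec_add_smul (hS : IsUnit S.det) (hM : IsUnit M.det)
    (hSM : S = vecMulVec u w + t • M) (hc : w ⬝ᵥ M⁻¹ *ᵥ u + t ≠ 0) :
    w ᵥ* S⁻¹ = (w ⬝ᵥ M⁻¹ *ᵥ u + t)⁻¹ • (w ᵥ* M⁻¹) := by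
  have hwMS : (w ᵥ* M⁻¹) ᵥ* S = (w ⬝ᵥ M⁻¹ *ᵥ u + t) • w := by
    rw [hSM, vecMul_add, vecMul_vecMulVec, vecMul_smul, vecMul_vecMul, nonsing_inv_mul _ hM,
      vecMul_one, add_smul, dotProduct_mulVec]
  rw [eq_inv_smul_iff₀ hc, ← smul_vecMul, ← hwMS, vecMul_vecMul, mul_nonsing_inv _ hS,
    vecMul_one]

theorem projectionMatrix_of_eq_vecMulVec_add_smul (hS : IsUnit S.det) (hM : IsUnit M.det)
    (hSM : S = vecMulVec u w + t • M) (hc : w ⬝ᵥ M⁻¹ *ᵥ u + t ≠ 0) :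
    projectionMatrix S u w =
      ((w ⬝ᵥ M⁻¹ *ᵥ u) * (w ⬝ᵥ M⁻¹ *ᵥ u + t))⁻¹ • (M⁻¹ * vecMulVec u w * M⁻¹) := by
  rw [projectionMatrix, mul_vecMulVec, vecMulVec_mul, mul_vecMulVec, vecMulVec_mul,
    inv_mulVec_of_eq_vecMulVec_add_smul hS hM hSM hc,
    vecMul_inv_of_eq_vecMulVec_add_smul hS hM hSM hc, dotProduct_smul, smul_vecMulVec,
    vecMulVec_smul, smul_smul, smul_smul]
  congr 1
  rw [smul_eq_mul, mul_inv, inv_inv, mul_inv]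
  field_simp

end Algebra

section Topology

variable [Field 𝕜] [TopologicalSpace 𝕜] [IsTopologicalDivisionRing 𝕜]
  {α : Type*} {l : Filter α}

theorem _root_.Filter.Tendsto.matrix_inv_s7 {M : α → Matrix ι ι 𝕜} {D : Matrix ι ι 𝕜}
    (hM : Tendsto M l (𝓝 D)) (hD : IsUnit D.det) : Tendsto (fun x => (M x)⁻¹) l (𝓝 D⁻¹) := by
  refine (continuousAt_matrix_inv D ?_).tendsto.comp hM
  rw [Ring.inverse_eq_inv']
  exact continuousAt_inv₀ hD.ne_zero

theorem tendsto_projectionMatrix_of_eq_vecMulVec_add_smul [T1Space 𝕜] {S M : α → Matrix ι ι 𝕜}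
    {t : α → 𝕜} {D : Matrix ι ι 𝕜} {u w : ι → 𝕜}
    (hS : ∀ᶠ x in l, IsUnit (S x).det) (hSM : ∀ᶠ x in l, S x = vecMulVec u w + t x • M x)
    (hM : Tendsto M l (𝓝 D)) (ht : Tendsto t l (𝓝 0)) (hD : IsUnit D.det)
    (hD' : w ⬝ᵥ D⁻¹ *ᵥ u ≠ 0) :
    Tendsto (fun x => projectionMatrix (S x) u w) l
      (𝓝 (((w ⬝ᵥ D⁻¹ *ᵥ u) ^ 2)⁻¹ • (D⁻¹ * vecMulVec u w * D⁻¹))) := by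
  have hMinv := hM.matrix_inv_s7 hD
  have hs : Tendsto (fun x => w ⬝ᵥ (M x)⁻¹ *ᵥ u) l (𝓝 (w ⬝ᵥ D⁻¹ *ᵥ u)) :=
    ((continuous_const.dotProduct (continuous_id.matrix_mulVec continuous_const)).tendsto _).comp
      hMinv
  have hst : Tendsto (fun x => w ⬝ᵥ (M x)⁻¹ *ᵥ u + t x) l (𝓝 (w ⬝ᵥ D⁻¹ *ᵥ u)) := by
    simpa using hs.add ht
  have hMdet : ∀ᶠ x in l, IsUnit (M x).det :=
    ((continuous_id.matrix_det.tendsto D).comp hM).eventually_ne hD.ne_zero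
      |>.mono fun _ h => h.isUnit
  have hlim : Tendsto
      (fun x => ((w ⬝ᵥ (M x)⁻¹ *ᵥ u) * (w ⬝ᵥ (M x)⁻¹ *ᵥ u + t x))⁻¹ •
        ((M x)⁻¹ * vecMulVec u w * (M x)⁻¹)) l
      (𝓝 (((w ⬝ᵥ D⁻¹ *ᵥ u) ^ 2)⁻¹ • (D⁻¹ * vecMulVec u w * D⁻¹))) := by
    rw [sq]
    exact ((hs.mul hst).inv₀ (mul_ne_zero hD' hD')).smul
      ((((continuous_id.matrix_mul continuous_const).matrix_mul continuous_id).tendsto _).comp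
        hMinv)
  refine hlim.congr' ?_
  filter_upwards [hS, hSM, hMdet, hst.eventually_ne hD'] with x hSx hSMx hMx hcx
  exact (projectionMatrix_of_eq_vecMulVec_add_smul hSx hMx hSMx hcx).symm

end Topology

end Matrix

theorem projection_matrix_tendsto_F_general
    (n : ℕ)
    (D : Matrix (Fin n) (Fin n) ℝ) (hDdet : IsUnit D.det)
    (hD1 : ones n ⬝ᵥ D⁻¹.mulVec (ones n) ≠ 0)
    (ν : ℝ → ℝ)
    (hν0 : Tendsto ν (𝓝[>] 0) (𝓝 0))
    (Sg : ℝ → Matrix (Fin n) (Fin n) ℝ) (hpd : ∀ ξ > 0, (Sg ξ).PosDef)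
    (E : ℝ → Matrix (Fin n) (Fin n) ℝ)
    (hE : ∀ i j, Tendsto (fun ξ => E ξ i j) (𝓝[>] 0) (𝓝 0))
    (hdecomp : ∀ ξ > 0, Sg ξ = vecMulVec (ones n) (ones n) + ν ξ • (D + E ξ)) :
    ∀ i j,
      Tendsto
        (fun ξ =>
          ((ones n ⬝ᵥ (Sg ξ)⁻¹.mulVec (ones n))⁻¹ •
            ((Sg ξ)⁻¹ * vecMulVec (ones n) (ones n) * (Sg ξ)⁻¹)) i j)
        (𝓝[>] 0)
        (𝓝 ((((ones n ⬝ᵥ D⁻¹.mulVec (ones n)) ^ 2)⁻¹ •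
          (D⁻¹ * vecMulVec (ones n) (ones n) * D⁻¹)) i j)) := by
  intro i j
  have hM : Tendsto (fun ξ => D + E ξ) (𝓝[>] 0) (𝓝 D) := by
    have hE0 : Tendsto E (𝓝[>] 0) (𝓝 0) := tendsto_pi_nhds.2 fun a => tendsto_pi_nhds.2 (hE a)
    simpa using (tendsto_const_nhds (x := D)).add hE0
  have hS : ∀ᶠ ξ in 𝓝[>] (0 : ℝ), IsUnit (Sg ξ).det :=
    eventually_mem_nhdsWithin.mono fun ξ hξ => (isUnit_iff_isUnit_det _).1 (hpd ξ hξ).isUnit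
  have hSM : ∀ᶠ ξ in 𝓝[>] (0 : ℝ), Sg ξ = vecMulVec (ones n) (ones n) + ν ξ • (D + E ξ) :=
    eventually_mem_nhdsWithin.mono hdecomp
  exact ((continuous_apply_apply i j).tendsto _).comp
    (tendsto_projectionMatrix_of_eq_vecMulVec_add_smul hS hSM hM hν0 hDdet hD1)

/-- Φ(ξ) = Σ(ξ)⁻¹1(1'Σ(ξ)⁻¹1)⁻¹1'Σ(ξ)⁻¹ converges entrywise to
F = D⁻¹11'D⁻¹/(1'D⁻¹1)². -/
theorem projection_matrix_tendsto_F
    (n : ℕ) (hn : 2 ≤ n)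
    (D : Matrix (Fin n) (Fin n) ℝ) (hDsymm : D.IsSymm) (hDdet : IsUnit D.det)
    (hD1 : ones n ⬝ᵥ D⁻¹.mulVec (ones n) ≠ 0)
    (ν : ℝ → ℝ) (hνpos : ∀ ξ > 0, 0 < ν ξ)
    (hν0 : Tendsto ν (𝓝[>] 0) (𝓝 0))
    (Sg : ℝ → Matrix (Fin n) (Fin n) ℝ) (hpd : ∀ ξ > 0, (Sg ξ).PosDef)
    (E : ℝ → Matrix (Fin n) (Fin n) ℝ)
    (hE : ∀ i j, Tendsto (fun ξ => E ξ i j) (𝓝[>] 0) (𝓝 0))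
    (hdecomp : ∀ ξ > 0, Sg ξ = vecMulVec (ones n) (ones n) + ν ξ • (D + E ξ)) :
    ∀ i j,
      Tendsto
        (fun ξ =>
          ((ones n ⬝ᵥ (Sg ξ)⁻¹.mulVec (ones n))⁻¹ •
            ((Sg ξ)⁻¹ * vecMulVec (ones n) (ones n) * (Sg ξ)⁻¹)) i j)
        (𝓝[>] 0)
        (𝓝 ((((ones n ⬝ᵥ D⁻¹.mulVec (ones n)) ^ 2)⁻¹ •
          (D⁻¹ * vecMulVec (ones n) (ones n) * D⁻¹)) i j)) :=
  projection_matrix_tendsto_F_general n D hDdet hD1 ν hν0 Sg hpd E hE hdecomp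
end

section
/- Let Σ̇_k be an arbitrary n_k × n_k real symmetric matrix, set Σ̇^k = Σ_1 ⊗ ⋯ ⊗ Σ_{k−1} ⊗ Σ̇_k ⊗ Σ_{k+1} ⊗ ⋯ ⊗ Σ_r and W_k = Σ̇^k Q. Then W_k = I_{n_1} ⊗ ⋯ ⊗ (Σ̇_kΣ_k^{-1}) ⊗ ⋯ ⊗ I_{n_r} − (Σ_1Φ_1) ⊗ ⋯ ⊗ (Σ̇_kΦ_k) ⊗ ⋯ ⊗ (Σ_rΦ_r), where in each Kronecker product the displayed factor occupies the k-th slot. -/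
open Matrix

/-- The `r`-fold Kronecker product, realized entrywise on the product index type. -/
def kron {r : ℕ} (ns : Fin r → ℕ)
    (M : (k : Fin r) → Matrix (Fin (ns k)) (Fin (ns k)) ℝ) :
    Matrix ((k : Fin r) → Fin (ns k)) ((k : Fin r) → Fin (ns k)) ℝ :=
  Matrix.of fun i j => ∏ k, M k (i k) (j k)

/-- Q = S⁻¹ − S⁻¹X(X'S⁻¹X)⁻¹X'S⁻¹ for a column vector X. -/
noncomputable def Qmat {ι : Type*} [Fintype ι] [DecidableEq ι]
    (S : Matrix ι ι ℝ) (X : ι → ℝ) : Matrix ι ι ℝ :=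
  S⁻¹ - (X ⬝ᵥ S⁻¹.mulVec X)⁻¹ • (S⁻¹ * vecMulVec X X * S⁻¹)

/-- Φ = S⁻¹X(X'S⁻¹X)⁻¹X'S⁻¹ for a column vector X. -/
noncomputable def Phi {m : ℕ} (S : Matrix (Fin m) (Fin m) ℝ) (X : Fin m → ℝ) :
    Matrix (Fin m) (Fin m) ℝ :=
  (X ⬝ᵥ S⁻¹.mulVec X)⁻¹ • (S⁻¹ * vecMulVec X X * S⁻¹)

lemma kron_mul {r : ℕ} (ns : Fin r → ℕ)
    (M N : (k : Fin r) → Matrix (Fin (ns k)) (Fin (ns k)) ℝ) :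
    kron ns M * kron ns N = kron ns (fun k => M k * N k) := by
  ext i j
  simp only [kron, mul_apply, of_apply]
  rw [Fintype.prod_sum (fun k x => M k (i k) x * N k x (j k))]
  exact Finset.sum_congr rfl fun x _ => (Finset.prod_mul_distrib).symm

lemma kron_one {r : ℕ} (ns : Fin r → ℕ) :
    kron ns (fun _ => (1 : Matrix _ _ ℝ)) = 1 := by
  ext i j
  by_cases h : i = j
  · simp [kron, h, Matrix.one_apply]
  · obtain ⟨l, hl⟩ := Function.ne_iff.mp h
    rw [Matrix.one_apply_ne h]
    exact Finset.prod_eq_zero (Finset.mem_univ l) (Matrix.one_apply_ne hl)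

lemma kron_smul {r : ℕ} (ns : Fin r → ℕ) (c : Fin r → ℝ)
    (M : (k : Fin r) → Matrix (Fin (ns k)) (Fin (ns k)) ℝ) :
    kron ns (fun k => c k • M k) = (∏ k, c k) • kron ns M := by
  ext i j
  simp [kron, Finset.prod_mul_distrib]

lemma kron_inv {r : ℕ} (ns : Fin r → ℕ)
    (M : (k : Fin r) → Matrix (Fin (ns k)) (Fin (ns k)) ℝ)
    (h : ∀ k, IsUnit (M k).det) :
    (kron ns M)⁻¹ = kron ns (fun k => (M k)⁻¹) := by
  apply Matrix.inv_eq_right_inv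
  rw [kron_mul]
  have : (fun k => M k * (M k)⁻¹) = fun _ => (1 : Matrix _ _ ℝ) :=
    funext fun k => Matrix.mul_nonsing_inv _ (h k)
  rw [this, kron_one]

lemma kron_dot {r : ℕ} (ns : Fin r → ℕ)
    (A : (k : Fin r) → Matrix (Fin (ns k)) (Fin (ns k)) ℝ)
    (Xs : (k : Fin r) → Fin (ns k) → ℝ) :
    (fun i => ∏ l, Xs l (i l)) ⬝ᵥ (kron ns A).mulVec (fun i => ∏ l, Xs l (i l))
      = ∏ l, Xs l ⬝ᵥ (A l).mulVec (Xs l) := by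
  simp only [dotProduct, mulVec, kron, of_apply]
  rw [Fintype.prod_sum (fun l x => Xs l x * ∑ y, A l x y * Xs l y)]
  refine Finset.sum_congr rfl fun p _ => ?_
  rw [Finset.prod_mul_distrib]
  congr 1
  rw [Fintype.prod_sum (fun l y => A l (p l) y * Xs l y)]
  exact Finset.sum_congr rfl fun q _ => (Finset.prod_mul_distrib).symm

lemma kron_vecMulVec {r : ℕ} (ns : Fin r → ℕ)
    (Xs : (k : Fin r) → Fin (ns k) → ℝ) :
    vecMulVec (fun i => ∏ l, Xs l (i l)) (fun i => ∏ l, Xs l (i l))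
      = kron ns (fun l => vecMulVec (Xs l) (Xs l)) := by
  ext i j
  simp [vecMulVec, kron, Finset.prod_mul_distrib]

/-- Wₖ = I ⊗ ⋯ ⊗ (Σ̇ₖΣₖ⁻¹) ⊗ ⋯ ⊗ I − (Σ₁Φ₁) ⊗ ⋯ ⊗ (Σ̇ₖΦₖ) ⊗ ⋯ ⊗ (ΣᵣΦᵣ). -/
theorem W_kronecker_decomposition
    (r : ℕ) (hr : 2 ≤ r) (ns : Fin r → ℕ)
    (Ss : (k : Fin r) → Matrix (Fin (ns k)) (Fin (ns k)) ℝ)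
    (hSs : ∀ k, (Ss k).PosDef)
    (Xs : (k : Fin r) → Fin (ns k) → ℝ) (hXs : ∀ k, Xs k ≠ 0)
    (k : Fin r) (Sd : Matrix (Fin (ns k)) (Fin (ns k)) ℝ) (hSd : Sd.IsSymm) :
    kron ns (Function.update Ss k Sd) * Qmat (kron ns Ss) (fun i => ∏ l, Xs l (i l))
      = kron ns (Function.update
            (fun l => (1 : Matrix (Fin (ns l)) (Fin (ns l)) ℝ)) k (Sd * (Ss k)⁻¹))
        - kron ns (Function.update
            (fun l => Ss l * Phi (Ss l) (Xs l)) k (Sd * Phi (Ss k) (Xs k))) := by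
  classical
  have hdet : ∀ l, IsUnit (Ss l).det := fun l => (hSs l).det_pos.ne'.isUnit
  have hinv : (kron ns Ss)⁻¹ = kron ns (fun l => (Ss l)⁻¹) := kron_inv ns Ss hdet
  set c : Fin r → ℝ := fun l => Xs l ⬝ᵥ (Ss l)⁻¹.mulVec (Xs l) with hc
  have hcval : (fun i => ∏ l, Xs l (i l)) ⬝ᵥ
      (kron ns Ss)⁻¹.mulVec (fun i => ∏ l, Xs l (i l)) = ∏ l, c l := by
    rw [hinv]; exact kron_dot ns _ Xs
  set X : ((l : Fin r) → Fin (ns l)) → ℝ := fun i => ∏ l, Xs l (i l) with hX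
  rw [Qmat, hcval, mul_sub, Matrix.mul_smul, hinv, kron_vecMulVec, kron_mul, kron_mul,
    kron_mul, kron_mul]
  congr 1
  · refine congrArg (kron ns) (funext fun l => ?_)
    rcases eq_or_ne l k with rfl | hlk
    · simp [Function.update_self]
    · simp [Function.update_of_ne hlk, Matrix.mul_nonsing_inv _ (hdet l)]
  · rw [← Finset.prod_inv_distrib, ← kron_smul]
    refine congrArg (kron ns) (funext fun l => ?_)
    rcases eq_or_ne l k with rfl | hlk
    · simp only [Function.update_self, Phi, hc]
      rw [Matrix.mul_smul]
    · simp only [Function.update_of_ne hlk, Phi, hc]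
      rw [Matrix.mul_smul]
end
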